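/- arXiv:2102.11475 — 5 statements merged into one kernel-verified Lean document; each statement's English description precedes it below -/
import Mathlib

section
/- Let G be a graph, u, v, w vertices of G, and P a path of length k in the complement of G connecting v and w such that P avoids u (i.e., P contains neither u nor any neighbour of u in the complement of G). If k is even then (u,v) Γ* (u,w), and if k is odd then (u,v) Γ* (w,u). -/
variable {V : Type*}

/-- The forcing relation Γ on ordered pairs of adjacent vertices. -/
def Gamma (G : SimpleGraph V) (p q : V × V) : Prop :=
  (p.1 = q.1 ∧ p.2 = q.2) ∨
  (p.1 = q.2 ∧ p.2 ≠ q.1 ∧ ¬ G.Adj p.2 q.1) ∨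
  (p.2 = q.1 ∧ p.1 ≠ q.2 ∧ ¬ G.Adj p.1 q.2)

/-- Γ*: there is a Γ-sequence from one pair to another. -/
def GammaStar (G : SimpleGraph V) : V × V → V × V → Prop :=
  Relation.ReflTransGen (Gamma G)

/-- `D` is an orientation of `G` that is a local tournament. -/
def IsLocalTournamentOrientation (G : SimpleGraph V) (D : V → V → Prop) : Prop :=
  (∀ u v, D u v → G.Adj u v) ∧
  (∀ u v, G.Adj u v → (D u v ∨ D v u)) ∧
  (∀ u v, D u v → ¬ D v u) ∧
  (∀ u v w, D u v → D u w → v ≠ w → G.Adj v w) ∧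
  (∀ u v w, D v u → D w u → v ≠ w → G.Adj v w)

/-- `A` is a set of arcs partially orienting `G`. -/
def IsPartialOrientation (G : SimpleGraph V) (A : V → V → Prop) : Prop :=
  (∀ u v, A u v → G.Adj u v) ∧ (∀ u v, A u v → ¬ A v u)

/-- The partially oriented graph `(G, A)` can be completed to a local tournament. -/
def CompletesToLocalTournament (G : SimpleGraph V) (A : V → V → Prop) : Prop :=
  ∃ D, IsLocalTournamentOrientation G D ∧ ∀ u v, A u v → D u v

/-- An obstruction for local tournament orientation completions. -/
def IsObstruction (G : SimpleGraph V) (A : V → V → Prop) : Prop :=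
  IsPartialOrientation G A ∧
  ¬ CompletesToLocalTournament G A ∧
  (∀ v : V, CompletesToLocalTournament (G.induce {u | u ≠ v})
      (fun a b => A a.1 b.1)) ∧
  (∀ a b, A a b →
    CompletesToLocalTournament G (fun u v => A u v ∧ ¬(u = a ∧ v = b)))

/-- A cut-vertex: deleting it increases the number of connected components. -/
def IsCutVertex (G : SimpleGraph V) (v : V) : Prop :=
  Nat.card G.ConnectedComponent <
    Nat.card ((G.induce {u | u ≠ v}).ConnectedComponent)

/-- `v` is the `(x,y)`-balancing vertex: the unique vertex (other than `x,y`)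
adjacent to exactly one of `x, y`. -/
def IsArcBalancingFor (G : SimpleGraph V) (x y v : V) : Prop :=
  v ≠ x ∧ v ≠ y ∧ Xor' (G.Adj v x) (G.Adj v y) ∧
  ∀ w, w ≠ x → w ≠ y → Xor' (G.Adj w x) (G.Adj w y) → w = v

lemma gamma_aux (G : SimpleGraph V) (u : V) : ∀ {v w : V} (p : Gᶜ.Walk v w),
    (Even p.length → GammaStar G (u, v) (u, w) ∧ GammaStar G (v, u) (w, u)) ∧
    (Odd p.length → GammaStar G (u, v) (w, u) ∧ GammaStar G (v, u) (u, w))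
  | v, _, SimpleGraph.Walk.nil => by
    refine ⟨fun _ => ⟨Relation.ReflTransGen.refl, Relation.ReflTransGen.refl⟩, fun h => ?_⟩
    simp at h
  | v, w, SimpleGraph.Walk.cons (v := v') h q => by
    obtain ⟨hne, hnadj⟩ := (SimpleGraph.compl_adj G v v').mp h
    have step1 : Gamma G (u, v) (v', u) :=
      Or.inr (Or.inl ⟨rfl, hne, hnadj⟩)
    have step2 : Gamma G (v, u) (u, v') :=
      Or.inr (Or.inr ⟨rfl, hne, hnadj⟩)
    have IH := gamma_aux G u q
    constructor
    · intro he
      rw [SimpleGraph.Walk.length_cons, Nat.even_add_one] at he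
      have ho := Nat.not_even_iff_odd.mp he
      exact ⟨Relation.ReflTransGen.head step1 (IH.2 ho).2,
             Relation.ReflTransGen.head step2 (IH.2 ho).1⟩
    · intro ho
      rw [SimpleGraph.Walk.length_cons, Nat.odd_add_one] at ho
      have ho := Nat.not_odd_iff_even.mp ho
      exact ⟨Relation.ReflTransGen.head step1 (IH.1 ho).2,
             Relation.ReflTransGen.head step2 (IH.1 ho).1⟩

/-- If P is a path of length k in the complement of G from v to w avoiding u
(it contains neither u nor any neighbour of u in the complement), then
(u,v) Γ* (u,w) when k is even and (u,v) Γ* (w,u) when k is odd. -/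
theorem gammaStar_of_avoiding_path (G : SimpleGraph V) (u v w : V) (k : ℕ)
    (p : Gᶜ.Walk v w) (hp : p.IsPath) (hk : p.length = k)
    (hu : u ∉ p.support) (havoid : ∀ x ∈ p.support, ¬ Gᶜ.Adj u x) :
    (Even k → GammaStar G (u, v) (u, w)) ∧
    (Odd k → GammaStar G (u, v) (w, u)) := by
  subst hk
  exact ⟨fun he => ((gamma_aux G u p).1 he).1, fun ho => ((gamma_aux G u p).2 ho).1⟩
end

section
/- If X is an obstruction for local tournament orientation completions with exactly two opposing arcs (a,b),(c,d), then any Γ-sequence in the underlying graph connecting (a,b) and (d,c) must include all vertices of X. -/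
variable {V : Type*}

private lemma chain'_strengthen {α : Type*} {R : α → α → Prop} {C : α → Prop} :
    ∀ l : List α, l.Chain' R → (∀ p ∈ l, C p) →
      l.Chain' (fun p q => R p q ∧ C p ∧ C q)
  | [], _, _ => List.isChain_nil
  | [_], _, _ => List.isChain_singleton _
  | a :: b :: t, hc, hmem => by
    rw [List.Chain', List.isChain_cons_cons] at hc ⊢
    exact ⟨⟨hc.1, hmem a (by simp), hmem b (by simp)⟩,
      chain'_strengthen (b :: t) hc.2 (fun p hp => hmem p (List.mem_cons_of_mem _ hp))⟩

private lemma chain'_force {α : Type*} {R : α → α → Prop} {P : α → Prop}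
    (hstep : ∀ p q, R p q → P p → P q) :
    ∀ l : List α, l.Chain' R → ∀ p0 pn, l.head? = some p0 →
      l.getLast? = some pn → P p0 → P pn
  | [], _, _, _, h0, _, _ => by simp at h0
  | [a], _, p0, pn, h0, hn, hp => by
    simp only [List.head?_cons, List.getLast?_singleton, Option.some_inj] at h0 hn
    subst h0; subst hn; exact hp
  | a :: b :: t, hc, p0, pn, h0, hn, hp => by
    rw [List.Chain', List.isChain_cons_cons] at hc
    have h0' : a = p0 := by simpa using h0
    subst h0'
    have hn' : (b :: t).getLast? = some pn := by
      rwa [List.getLast?_cons_cons] at hn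
    exact chain'_force hstep (b :: t) hc.2 b pn rfl hn' (hstep a b hc.1 hp)

/-- If X is an obstruction whose two (opposing) arcs are (a,b) and (c,d),
then any Γ-sequence in the underlying graph connecting (a,b) and (d,c)
includes every vertex of X. -/
theorem gammaSequence_includes_all_vertices (G : SimpleGraph V)
    (A : V → V → Prop) (a b c d : V)
    (hobs : IsObstruction G A) (hab : A a b) (hcd : A c d)
    (hne : (a, b) ≠ (c, d))
    (honly : ∀ x y, A x y → (x = a ∧ y = b) ∨ (x = c ∧ y = d))
    (hopp : GammaStar G (a, b) (d, c))
    (l : List (V × V)) (hchain : l.Chain' (Gamma G))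
    (hadj : ∀ p ∈ l, G.Adj p.1 p.2)
    (hhead : l.head? = some (a, b)) (hlast : l.getLast? = some (d, c)) :
    ∀ x : V, ∃ p ∈ l, x = p.1 ∨ x = p.2 := by
  intro x
  by_contra h
  push_neg at h
  obtain ⟨D, hD, hA⟩ := hobs.2.2.1 x
  have hCall : ∀ p ∈ l, p.1 ≠ x ∧ p.2 ≠ x ∧ G.Adj p.1 p.2 := fun p hp =>
    ⟨fun e => (h p hp).1 e.symm, fun e => (h p hp).2 e.symm, hadj p hp⟩
  have hstep : ∀ p q,
      (Gamma G p q ∧ (p.1 ≠ x ∧ p.2 ≠ x ∧ G.Adj p.1 p.2) ∧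
        (q.1 ≠ x ∧ q.2 ≠ x ∧ G.Adj q.1 q.2)) →
      (∃ (h1 : p.1 ≠ x) (h2 : p.2 ≠ x), D ⟨p.1, h1⟩ ⟨p.2, h2⟩) →
      (∃ (h1 : q.1 ≠ x) (h2 : q.2 ≠ x), D ⟨q.1, h1⟩ ⟨q.2, h2⟩) := by
    rintro ⟨p1, p2⟩ ⟨q1, q2⟩ ⟨hg, ⟨hp1, hp2, hpadj⟩, ⟨hq1, hq2, hqadj⟩⟩ ⟨h1, h2, hpD⟩
    simp only [Gamma] at hg
    have hHq : (G.induce {u | u ≠ x}).Adj ⟨q1, hq1⟩ ⟨q2, hq2⟩ := hqadj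
    rcases hg with ⟨e1, e2⟩ | ⟨e, hne2, hnadj⟩ | ⟨e, hne1, hnadj⟩
    · subst e1; subst e2; exact ⟨h1, h2, hpD⟩
    · rcases hD.2.1 _ _ hHq with hgood | hbad
      · exact ⟨hq1, hq2, hgood⟩
      · exfalso
        have e' : (⟨p1, h1⟩ : {u | u ≠ x}) = ⟨q2, hq2⟩ := Subtype.ext e
        rw [e'] at hpD
        have hne' : (⟨p2, h2⟩ : {u | u ≠ x}) ≠ ⟨q1, hq1⟩ :=
          fun e => hne2 (congrArg Subtype.val e)
        exact hnadj (hD.2.2.2.1 _ _ _ hpD hbad hne')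
    · rcases hD.2.1 _ _ hHq with hgood | hbad
      · exact ⟨hq1, hq2, hgood⟩
      · exfalso
        have e' : (⟨p2, h2⟩ : {u | u ≠ x}) = ⟨q1, hq1⟩ := Subtype.ext e
        rw [e'] at hpD
        have hne' : (⟨p1, h1⟩ : {u | u ≠ x}) ≠ ⟨q2, hq2⟩ :=
          fun e => hne1 (congrArg Subtype.val e)
        exact hnadj (hD.2.2.2.2 _ _ _ hpD hbad hne')
  have hchain' := chain'_strengthen l hchain hCall
  have hmem_ab : (a, b) ∈ l := List.mem_of_mem_head? (Option.mem_def.mpr hhead)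
  obtain ⟨ha, hb, -⟩ := hCall _ hmem_ab
  have hforced : ∃ (h1 : d ≠ x) (h2 : c ≠ x), D ⟨d, h1⟩ ⟨c, h2⟩ :=
    chain'_force (P := fun p => ∃ (h1 : p.1 ≠ x) (h2 : p.2 ≠ x), D ⟨p.1, h1⟩ ⟨p.2, h2⟩)
      hstep l hchain' (a, b) (d, c) hhead hlast ⟨ha, hb, hA ⟨a, ha⟩ ⟨b, hb⟩ hab⟩
  obtain ⟨h1, h2, hdc⟩ := hforced
  exact hD.2.2.1 _ _ (hA ⟨c, h2⟩ ⟨d, h1⟩ hcd) hdc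
end

section
/- Let G be a connected graph admitting a straight enumeration v1, v2, ..., vn, and suppose v_α is a cut-vertex of the complement of G. Then α ∈ {1, n}, and G − v_α contains a vertex adjacent in G to every vertex except v_α. -/
variable {V : Type*}

open SimpleGraph

lemma adj_between' [LinearOrder V] {G : SimpleGraph V}
    (humb : ∀ u v w : V, u < v → v < w → G.Adj u w → G.Adj u v ∧ G.Adj v w)
    {x' x y y' : V} (h1 : x' ≤ x) (h2 : x < y) (h3 : y ≤ y')
    (h : G.Adj x' y') : G.Adj x y := by
  rcases h1.eq_or_lt with rfl | h1'
  · rcases h3.eq_or_lt with rfl | h3'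
    · exact h
    · exact (humb x' y y' h2 h3' h).1
  · rcases h3.eq_or_lt with rfl | h3'
    · exact (humb x' x y h1' h2 h).2
    · exact (humb x y y' h2 h3' (humb x' x y' h1' (h2.trans h3') h).2).1

/-- Edge in the induced subgraph avoiding `a`. -/
lemma cedge' {G' : SimpleGraph V} {a s t : V} (hs : s ≠ a) (ht : t ≠ a)
    (h : G'.Adj s t) :
    (G'.induce {u | u ≠ a}).Adj ⟨s, hs⟩ ⟨t, ht⟩ := by
  simpa using h

/-- Rerouting lemma: a walk either avoids `a` (up to rerouting) or we can
extract neighbors of `a` bridging the two sides. -/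
lemma reroute'_aux (G' : SimpleGraph V) (a : V) {y : V} (hy : y ≠ a) :
    ∀ (n : ℕ) {x : V} (hx : x ≠ a) (p : G'.Walk x y), p.length = n →
      (G'.induce {u | u ≠ a}).Reachable ⟨x, hx⟩ ⟨y, hy⟩ ∨
      ∃ (u v : V) (hu : u ≠ a) (hv : v ≠ a), G'.Adj u a ∧ G'.Adj a v ∧
        (G'.induce {u | u ≠ a}).Reachable ⟨x, hx⟩ ⟨u, hu⟩ ∧
        (G'.induce {u | u ≠ a}).Reachable ⟨v, hv⟩ ⟨y, hy⟩ := by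
  intro n
  induction n using Nat.strong_induction_on with
  | _ n ih =>
    intro x hx p hlen
    cases p with
    | nil => exact Or.inl (Reachable.refl _)
    | @cons _ z _ h q =>
      by_cases hz : a = z
      · subst hz
        cases q with
        | nil => exact absurd rfl hy
        | @cons _ w _ h' q' =>
          have hw : w ≠ a := h'.ne'
          have hlt : q'.length < n := by
            simp only [SimpleGraph.Walk.length_cons] at hlen; omega
          rcases ih q'.length hlt hw q' rfl with
            h1 | ⟨u, v, hu, hv, hua, hav, _, r2⟩
          · exact Or.inr ⟨x, w, hx, hw, h, h', Reachable.refl _, h1⟩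
          · exact Or.inr ⟨x, v, hx, hv, h, hav, Reachable.refl _, r2⟩
      · have hz' : z ≠ a := fun e => hz e.symm
        have e : (G'.induce {u | u ≠ a}).Adj ⟨x, hx⟩ ⟨z, hz'⟩ := cedge' hx hz' h
        have hlt : q.length < n := by
          simp only [SimpleGraph.Walk.length_cons] at hlen; omega
        rcases ih q.length hlt hz' q rfl with
          h1 | ⟨u, v, hu, hv, hua, hav, r1, r2⟩
        · exact Or.inl (e.reachable.trans h1)
        · exact Or.inr ⟨u, v, hu, hv, hua, hav, e.reachable.trans r1, r2⟩

lemma reroute' (G' : SimpleGraph V) (a : V) {x y : V} (hx : x ≠ a) (hy : y ≠ a)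
    (p : G'.Walk x y) :
    (G'.induce {u | u ≠ a}).Reachable ⟨x, hx⟩ ⟨y, hy⟩ ∨
      ∃ (u v : V) (hu : u ≠ a) (hv : v ≠ a), G'.Adj u a ∧ G'.Adj a v ∧
        (G'.induce {u | u ≠ a}).Reachable ⟨x, hx⟩ ⟨u, hu⟩ ∧
        (G'.induce {u | u ≠ a}).Reachable ⟨v, hv⟩ ⟨y, hy⟩ :=
  reroute'_aux G' a hy p.length hx p rfl

lemma exists_bad_pair' [Fintype V] (G' : SimpleGraph V) (a : V)
    (hcut : Nat.card G'.ConnectedComponent <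
      Nat.card ((G'.induce {u | u ≠ a}).ConnectedComponent)) :
    ∃ (x y : V) (hx : x ≠ a) (hy : y ≠ a), G'.Reachable x y ∧
      ¬ (G'.induce {u | u ≠ a}).Reachable ⟨x, hx⟩ ⟨y, hy⟩ := by
  by_contra hcon
  push_neg at hcon
  set H := G'.induce {u | u ≠ a} with hH
  let φ : H →g G' := (SimpleGraph.Embedding.induce {u | u ≠ a}).toHom
  have hinj : Function.Injective (ConnectedComponent.map φ) := by
    intro C D
    refine ConnectedComponent.ind₂ (fun s t hmap => ?_) C D
    rw [ConnectedComponent.map_mk, ConnectedComponent.map_mk] at hmap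
    have hr : G'.Reachable s.1 t.1 := ConnectedComponent.exact hmap
    have := hcon s.1 t.1 s.2 t.2 hr
    exact ConnectedComponent.sound this
  exact absurd (Nat.card_le_card_of_injective _ hinj) (not_le.mpr hcut)

/-- Core lemma: under `a` maximal and two separated nonneighbors of `a`,
one of them dominates. -/
lemma core' [LinearOrder V] {G : SimpleGraph V}
    (humb : ∀ u v w : V, u < v → v < w → G.Adj u w → G.Adj u v ∧ G.Adj v w)
    {a u v : V} (huv : u < v) (hv : v ≠ a)
    (hadj : G.Adj u v) (hu : u ≠ a)
    (hnr : ¬ (Gᶜ.induce {w | w ≠ a}).Reachable ⟨u, hu⟩ ⟨v, hv⟩) :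
    ∃ b : V, b ≠ a ∧ ∀ w : V, w ≠ a → w ≠ b → G.Adj b w := by
  by_contra hcon
  push_neg at hcon
  obtain ⟨w1, hw1a, hw1u, hw1⟩ := hcon u hu
  obtain ⟨w2, hw2a, hw2v, hw2⟩ := hcon v hv
  apply hnr
  have ce : ∀ {s t : V} (hs : s ≠ a) (ht : t ≠ a), s ≠ t → ¬ G.Adj s t →
      (Gᶜ.induce {w | w ≠ a}).Adj ⟨s, hs⟩ ⟨t, ht⟩ := fun hs ht hne hn =>
    cedge' hs ht ((G.compl_adj _ _).mpr ⟨hne, hn⟩)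
  rcases lt_trichotomy w2 v with h2 | h2 | h2
  · rcases lt_trichotomy w2 u with h2u | h2u | h2u
    · -- w2 < u : use w1
      rcases lt_trichotomy w1 u with h1u | h1u | h1u
      · -- w1 < u : w1 nonadjacent to both u and v
        have hnw1v : ¬ G.Adj w1 v := fun hc =>
          hw1 ((humb w1 u v h1u huv hc).1.symm)
        exact ((ce hu hw1a (fun e => hw1u e.symm) (fun hc => hw1 hc)).reachable).trans
          ((ce hw1a hv (ne_of_lt (h1u.trans huv)) hnw1v).reachable)
      · exact absurd h1u hw1u
      · rcases lt_trichotomy w1 v with h1v | h1v | h1v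
        · exact absurd (humb u w1 v h1u h1v hadj).1 hw1
        · exact absurd (h1v ▸ hadj) hw1
        · -- w2 < u < v < w1 : path u - w1 - w2 - v
          have hnw2w1 : ¬ G.Adj w2 w1 := fun hc =>
            hw2 (adj_between' humb le_rfl h2 h1v.le hc).symm
          have e1 := ce hu hw1a (ne_of_lt (huv.trans h1v)) hw1
          have e2 := ce hw1a hw2a (ne_of_gt ((h2u.trans huv).trans h1v))
            (fun hc => hnw2w1 hc.symm)
          have e3 := ce hw2a hv (ne_of_lt (h2u.trans huv)) (fun hc => hw2 hc.symm)
          exact (e1.reachable.trans e2.reachable).trans e3.reachable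
    · exact absurd (h2u ▸ hadj.symm) hw2
    · exact absurd (humb u w2 v h2u h2 hadj).2 (fun hc => hw2 hc.symm)
  · exact absurd h2 hw2v
  · -- v < w2 : path u - w2 - v
    have hnuw2 : ¬ G.Adj u w2 := fun hc =>
      hw2 (adj_between' humb huv.le h2 le_rfl hc)
    exact ((ce hu hw2a (ne_of_lt (huv.trans h2)) hnuw2).reachable).trans
      ((ce hw2a hv (ne_of_gt h2) (fun hc => hw2 hc.symm)).reachable)

lemma key2' [LinearOrder V] {G : SimpleGraph V}
    (humb : ∀ u v w : V, u < v → v < w → G.Adj u w → G.Adj u v ∧ G.Adj v w)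
    {a u v : V} (hu : u ≠ a) (hv : v ≠ a) (hadj : G.Adj u v)
    (hnr : ¬ (Gᶜ.induce {w | w ≠ a}).Reachable ⟨u, hu⟩ ⟨v, hv⟩) :
    ∃ b : V, b ≠ a ∧ ∀ w : V, w ≠ a → w ≠ b → G.Adj b w := by
  rcases lt_trichotomy u v with h | h | h
  · exact core' humb h hv hadj hu hnr
  · exact absurd h hadj.ne
  · exact core' humb h hu hadj.symm hv
      (fun hr => hnr hr.symm)

/-- If a connected graph with a straight enumeration (a linear order with the
umbrella property) has a cut-vertex a of its complement, then a is the first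
or last vertex in the enumeration, and some other vertex is adjacent to every
vertex except a. -/
theorem cutVertex_of_complement_extreme [Fintype V] [LinearOrder V]
    (G : SimpleGraph V) (hconn : G.Connected)
    (humb : ∀ u v w : V, u < v → v < w → G.Adj u w → G.Adj u v ∧ G.Adj v w)
    (a : V) (hcut : IsCutVertex Gᶜ a) :
    ((∀ u : V, a ≤ u) ∨ (∀ u : V, u ≤ a)) ∧
      ∃ b : V, b ≠ a ∧ ∀ u : V, u ≠ a → u ≠ b → G.Adj b u := by
  obtain ⟨x, y, hx, hy, hr, hnreach⟩ := exists_bad_pair' Gᶜ a hcut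
  obtain ⟨p⟩ := hr
  rcases reroute' Gᶜ a hx hy p with h1 | ⟨u, v, hu, hv, hcua, hcav, r1, r2⟩
  · exact absurd h1 hnreach
  have hnr : ¬ (Gᶜ.induce {w | w ≠ a}).Reachable ⟨u, hu⟩ ⟨v, hv⟩ :=
    fun h => hnreach (r1.trans (h.trans r2))
  have huv : u ≠ v := by
    intro e
    exact hnr (by subst e; exact Reachable.refl _)
  have hGuv : G.Adj u v := by
    by_contra hno
    exact hnr (cedge' hu hv ((G.compl_adj u v).mpr ⟨huv, hno⟩)).reachable
  have hua : ¬ G.Adj u a := ((G.compl_adj u a).mp hcua).2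
  have hav : ¬ G.Adj a v := ((G.compl_adj a v).mp hcav).2
  have hva : ¬ G.Adj v a := fun hc => hav hc.symm
  refine ⟨?_, key2' humb hu hv hGuv hnr⟩
  by_contra hne
  push_neg at hne
  obtain ⟨⟨q, hq⟩, ⟨p', hp⟩⟩ := hne
  apply hnr
  rcases (lt_or_gt_of_ne hu) with hu1 | hu1
  · rcases (lt_or_gt_of_ne hv) with hv1 | hv1
    · -- u < a, v < a : use p' with a < p'
      have h1 : ¬ G.Adj u p' := fun hc => hua (humb u a p' hu1 hp hc).1
      have h2 : ¬ G.Adj v p' := fun hc => hva (humb v a p' hv1 hp hc).1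
      have e1 := cedge' hu hp.ne'
        ((G.compl_adj u p').mpr ⟨ne_of_lt (hu1.trans hp), h1⟩)
      have e2 := cedge' hp.ne' hv
        ((G.compl_adj p' v).mpr ⟨ne_of_gt (hv1.trans hp), fun hc => h2 hc.symm⟩)
      exact e1.reachable.trans e2.reachable
    · exact absurd (humb u a v hu1 hv1 hGuv).1 hua
  · rcases (lt_or_gt_of_ne hv) with hv1 | hv1
    · exact absurd (humb v a u hv1 hu1 hGuv.symm).1 hva
    · -- a < u, a < v : use q with q < a
      have h1 : ¬ G.Adj q u := fun hc => hua (humb q a u hq hu1 hc).2.symm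
      have h2 : ¬ G.Adj q v := fun hc => hav (humb q a v hq hv1 hc).2
      have e1 := cedge' hu hq.ne
        ((G.compl_adj u q).mpr ⟨ne_of_gt (hq.trans hu1), fun hc => h1 hc.symm⟩)
      have e2 := cedge' hq.ne hv
        ((G.compl_adj q v).mpr ⟨ne_of_lt (hq.trans hv1), h2⟩)
      exact e1.reachable.trans e2.reachable
end

section
/- Let X be an obstruction for local tournament orientation completions with straight enumeration v1, ..., vn of its underlying graph, and suppose v_c is a non-dividing cut-vertex of U(X). Then c = 2 or c = n−1. Moreover, if v_c is incident with both arcs of X, then n = 4. -/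
variable {V : Type*}

/-- A cut-vertex c is dividing (w.r.t. the enumeration and the two arcs) if
one arc is incident with a vertex preceding c and the other with a vertex
succeeding c. -/
def IsDividing {n : ℕ} (a₁ b₁ a₂ b₂ c : Fin n) : Prop :=
  ((a₁ < c ∨ b₁ < c) ∧ (c < a₂ ∨ c < b₂)) ∨
  ((a₂ < c ∨ b₂ < c) ∧ (c < a₁ ∨ c < b₁))


section Aux

variable {V : Type*}

lemma ltOrient (G : SimpleGraph V) (r : V → V → Prop)
    (rtri : ∀ a b : V, a = b ∨ r a b ∨ r b a)
    (rasym : ∀ a b : V, r a b → ¬ r b a)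
    (humb : ∀ u v w : V, r u v → r v w → G.Adj u w → G.Adj u v ∧ G.Adj v w) :
    IsLocalTournamentOrientation G (fun u v => G.Adj u v ∧ r u v) := by
  refine ⟨fun u v h => h.1, ?_, ?_, ?_, ?_⟩
  · intro u v h
    rcases rtri u v with e | h1 | h1
    · exact absurd e h.ne
    · exact Or.inl ⟨h, h1⟩
    · exact Or.inr ⟨h.symm, h1⟩
  · intro u v h h'
    exact rasym u v h.2 h'.2
  · intro u v w hv hw hne
    rcases rtri v w with e | h1 | h1
    · exact absurd e hne
    · exact (humb u v w hv.2 h1 hw.1).2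
    · exact ((humb u w v hw.2 h1 hv.1).2).symm
  · intro u v w hv hw hne
    rcases rtri v w with e | h1 | h1
    · exact absurd e hne
    · exact (humb v w u h1 hw.2 hv.1).1
    · exact ((humb w v u h1 hv.2 hw.1).1).symm

lemma no_del (G : SimpleGraph V) (A : V → V → Prop)
    (p q c m z : V) (hpz : p ≠ z) (hqz : q ≠ z) (hcz : c ≠ z) (hmz : m ≠ z)
    (hpm : p ≠ m) (hqm : q ≠ m)
    (hpmadj : ¬ G.Adj p m) (hqmadj : ¬ G.Adj q m) (hcm : G.Adj c m)
    (hpc : A p c) (hcq : A c q)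
    (hcomp : CompletesToLocalTournament (G.induce {u | u ≠ z}) (fun a b => A a.1 b.1)) :
    False := by
  obtain ⟨D, hD, hDA⟩ := hcomp
  have hadj : (G.induce {u | u ≠ z}).Adj ⟨c, hcz⟩ ⟨m, hmz⟩ := hcm
  rcases hD.2.1 _ _ hadj with h | h
  · have hq' : D ⟨c, hcz⟩ ⟨q, hqz⟩ := hDA ⟨c, hcz⟩ ⟨q, hqz⟩ hcq
    have h2 := hD.2.2.2.1 ⟨c, hcz⟩ ⟨m, hmz⟩ ⟨q, hqz⟩ h hq'
      (fun e => hqm (congrArg Subtype.val e).symm)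
    exact hqmadj (show G.Adj m q from h2).symm
  · have hp' : D ⟨p, hpz⟩ ⟨c, hcz⟩ := hDA ⟨p, hpz⟩ ⟨c, hcz⟩ hpc
    have h2 := hD.2.2.2.2 ⟨c, hcz⟩ ⟨m, hmz⟩ ⟨p, hpz⟩ h hp'
      (fun e => hpm (congrArg Subtype.val e).symm)
    exact hpmadj (show G.Adj m p from h2).symm

lemma lift_reach (G : SimpleGraph V) (c : V)
    (hhop : ∀ (u y : V) (hu : u ≠ c) (hy : y ≠ c), u ≠ y → G.Adj u c → G.Adj c y →
      (G.induce {x | x ≠ c}).Reachable ⟨u, hu⟩ ⟨y, hy⟩) :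
    ∀ (u w : V) (hu : u ≠ c) (hw : w ≠ c), G.Reachable u w →
      (G.induce {x | x ≠ c}).Reachable ⟨u, hu⟩ ⟨w, hw⟩ := by
  suffices H : ∀ (k : ℕ) (u w : V) (hu : u ≠ c) (hw : w ≠ c) (W : G.Walk u w),
      W.length ≤ k → (G.induce {x | x ≠ c}).Reachable ⟨u, hu⟩ ⟨w, hw⟩ by
    intro u w hu hw hr
    obtain ⟨W⟩ := hr
    exact H W.length u w hu hw W le_rfl
  intro k
  induction k with
  | zero =>
    intro u w hu hw W hlen
    cases W with
    | nil => exact SimpleGraph.Reachable.refl _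
    | cons h W' => simp [SimpleGraph.Walk.length_cons] at hlen
  | succ k ih =>
    intro u w hu hw W hlen
    cases W with
    | nil => exact SimpleGraph.Reachable.refl _
    | @cons _ x _ h W' =>
      by_cases hx : x = c
      · have hx2 := hx.symm
        subst hx2
        cases W' with
        | nil => exact absurd rfl hw
        | @cons _ y _ h2 W'' =>
          have hy : y ≠ c := by
            intro e; subst e; exact G.loopless.irrefl _ h2
          have hlen'' : W''.length ≤ k := by
            simp only [SimpleGraph.Walk.length_cons] at hlen; omega
          by_cases huy : u = y
          · subst huy
            exact ih u w hu hw W'' hlen''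
          · exact (hhop u y hu hy huy h h2).trans (ih y w hy hw W'' hlen'')
      · have hadj : (G.induce {x | x ≠ c}).Adj ⟨u, hu⟩ ⟨x, hx⟩ := h
        have hlen' : W'.length ≤ k := by
          simp only [SimpleGraph.Walk.length_cons] at hlen; omega
        exact hadj.reachable.trans (ih x w hx hw W' hlen')

lemma not_cut [Finite V] (G : SimpleGraph V) (c : V)
    (hhop : ∀ (u y : V) (hu : u ≠ c) (hy : y ≠ c), u ≠ y → G.Adj u c → G.Adj c y →
      (G.induce {x | x ≠ c}).Reachable ⟨u, hu⟩ ⟨y, hy⟩) :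
    ¬ IsCutVertex G c := by
  intro hcut
  classical
  let φ : (G.induce {x | x ≠ c}) →g G := (SimpleGraph.Embedding.induce {x | x ≠ c}).toHom
  have hinj : Function.Injective (SimpleGraph.ConnectedComponent.map φ) := by
    intro x y
    refine SimpleGraph.ConnectedComponent.ind₂ (fun a b hmap => ?_) x y
    rw [SimpleGraph.ConnectedComponent.map_mk, SimpleGraph.ConnectedComponent.map_mk] at hmap
    have hr : G.Reachable (a : V) (b : V) := SimpleGraph.ConnectedComponent.eq.mp hmap
    have := lift_reach G c hhop (a : V) (b : V) a.2 b.2 hr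
    exact SimpleGraph.ConnectedComponent.eq.mpr (by simpa using this)
  have hle := Nat.card_le_card_of_injective _ hinj
  unfold IsCutVertex at hcut
  omega

lemma core (G : SimpleGraph V) (A : V → V → Prop)
    (r : V → V → Prop)
    (rtri : ∀ a b : V, a = b ∨ r a b ∨ r b a)
    (rasym : ∀ a b : V, r a b → ¬ r b a)
    (rtrans : ∀ a b c : V, r a b → r b c → r a c)
    (humb : ∀ u v w : V, r u v → r v w → G.Adj u w → G.Adj u v ∧ G.Adj v w)
    (c d L : V)
    (hAadj : ∀ x y, A x y → G.Adj x y)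
    (hAle : ∀ x y, A x y → ¬ r c x ∧ ¬ r c y)
    (hcd : r c d) (hdL : r d L) (hadjcd : G.Adj c d)
    (hcross : ∀ u w, r u c → r c w → ¬ G.Adj u w)
    (hcomp : CompletesToLocalTournament (G.induce {u | u ≠ L}) (fun a b => A a.1 b.1)) :
    CompletesToLocalTournament G A := by
  classical
  obtain ⟨D, hD, hDA⟩ := hcomp
  have hrcc : ¬ r c c := fun h => rasym c c h h
  have hult : ∀ x : V, ¬ r c x → x ≠ L := by
    intro x hx e
    exact hx (e ▸ rtrans c d L hcd hdL)
  have hcL : c ≠ L := hult c hrcc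
  have hdL' : d ≠ L := by
    intro e; rw [← e] at hdL; exact rasym d d hdL hdL
  have hadjS : (G.induce {u | u ≠ L}).Adj ⟨c, hcL⟩ ⟨d, hdL'⟩ := hadjcd
  rcases hD.2.1 _ _ hadjS with hout | hin
  · -- c → d in D; all "left" edges at c point into c
    have hnlo : ∀ (v : V) (hv : v ≠ L), r v c → ¬ D ⟨c, hcL⟩ ⟨v, hv⟩ := by
      intro v hv hvc hDv
      have hvd : r v d := rtrans _ _ _ hvc hcd
      have hne : (⟨v, hv⟩ : {u | u ≠ L}) ≠ ⟨d, hdL'⟩ := by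
        intro e
        have : v = d := congrArg Subtype.val e
        subst this; exact rasym _ _ hvd hvd
      have := hD.2.2.2.1 ⟨c, hcL⟩ ⟨v, hv⟩ ⟨d, hdL'⟩ hDv hout hne
      exact hcross v d hvc hcd (show G.Adj v d from this)
    refine ⟨fun u v => G.Adj u v ∧
      (if h : ¬ r c u ∧ ¬ r c v then D ⟨u, hult u h.1⟩ ⟨v, hult v h.2⟩ else r u v),
      ⟨fun u v h => h.1, ?_, ?_, ?_, ?_⟩, ?_⟩
    · -- totality
      intro u v hadj
      by_cases h : ¬ r c u ∧ ¬ r c v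
      · have hadj' : (G.induce {u | u ≠ L}).Adj ⟨u, hult u h.1⟩ ⟨v, hult v h.2⟩ := hadj
        rcases hD.2.1 _ _ hadj' with h1 | h1
        · exact Or.inl ⟨hadj, by rw [dif_pos h]; exact h1⟩
        · exact Or.inr ⟨hadj.symm, by rw [dif_pos ⟨h.2, h.1⟩]; exact h1⟩
      · rcases rtri u v with e | h1 | h1
        · exact absurd e hadj.ne
        · exact Or.inl ⟨hadj, by rw [dif_neg h]; exact h1⟩
        · exact Or.inr ⟨hadj.symm, by rw [dif_neg (fun hh => h ⟨hh.2, hh.1⟩)]; exact h1⟩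
    · -- antisymmetry
      intro u v ⟨hadj, hh1⟩ ⟨hadj', hh2⟩
      by_cases h : ¬ r c u ∧ ¬ r c v
      · rw [dif_pos h] at hh1; rw [dif_pos ⟨h.2, h.1⟩] at hh2
        exact hD.2.2.1 _ _ hh1 hh2
      · rw [dif_neg h] at hh1; rw [dif_neg (fun hh => h ⟨hh.2, hh.1⟩)] at hh2
        exact rasym u v hh1 hh2
    · -- out condition
      intro u v w ⟨hadjv, hh1⟩ ⟨hadjw, hh2⟩ hvw
      by_cases hv : ¬ r c u ∧ ¬ r c v <;> by_cases hw' : ¬ r c u ∧ ¬ r c w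
      · rw [dif_pos hv] at hh1; rw [dif_pos hw'] at hh2
        exact hD.2.2.2.1 _ _ _ hh1 hh2 (fun e => hvw (congrArg Subtype.val e))
      · -- class1 uv, class2 uw
        rw [dif_pos hv] at hh1; rw [dif_neg hw'] at hh2
        have hrcw : r c w := by
          by_contra hh; exact hw' ⟨hv.1, hh⟩
        rcases rtri u c with e | huc | hcu
        · have ecast : (⟨u, hult u hv.1⟩ : {x | x ≠ L}) = ⟨c, hcL⟩ := Subtype.ext e
          rcases rtri v c with e' | hvc | hcv
          · exact (hadjv.ne (e.trans e'.symm)).elim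
          · rw [ecast] at hh1
            exact absurd hh1 (hnlo v _ hvc)
          · exact absurd hcv hv.2
        · exact absurd hadjw (hcross u w huc hrcw)
        · exact absurd hcu hv.1
      · -- class2 uv, class1 uw
        rw [dif_neg hv] at hh1; rw [dif_pos hw'] at hh2
        have hrcv : r c v := by
          by_contra hh; exact hv ⟨hw'.1, hh⟩
        rcases rtri u c with e | huc | hcu
        · have ecast : (⟨u, hult u hw'.1⟩ : {x | x ≠ L}) = ⟨c, hcL⟩ := Subtype.ext e
          rcases rtri w c with e' | hvc | hcv
          · exact (hadjw.ne (e.trans e'.symm)).elim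
          · rw [ecast] at hh2
            exact absurd hh2 (hnlo w _ hvc)
          · exact absurd hcv hw'.2
        · exact absurd hadjv (hcross u v huc hrcv)
        · exact absurd hcu hw'.1
      · -- both class2
        rw [dif_neg hv] at hh1; rw [dif_neg hw'] at hh2
        rcases rtri v w with e | h1 | h1
        · exact absurd e hvw
        · exact (humb u v w hh1 h1 hadjw).2
        · exact ((humb u w v hh2 h1 hadjv).2).symm
    · -- in condition
      intro u v w ⟨hadjv, hh1⟩ ⟨hadjw, hh2⟩ hvw
      by_cases hv : ¬ r c v ∧ ¬ r c u <;> by_cases hw' : ¬ r c w ∧ ¬ r c u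
      · rw [dif_pos hv] at hh1; rw [dif_pos hw'] at hh2
        exact hD.2.2.2.2 _ _ _ hh1 hh2 (fun e => hvw (congrArg Subtype.val e))
      · rw [dif_neg hw'] at hh2
        have hrcw : r c w := by
          by_contra hh; exact hw' ⟨hh, hv.2⟩
        exact absurd (rtrans c w u hrcw hh2) hv.2
      · rw [dif_neg hv] at hh1
        have hrcv : r c v := by
          by_contra hh; exact hv ⟨hh, hw'.2⟩
        exact absurd (rtrans c v u hrcv hh1) hw'.2
      · rw [dif_neg hv] at hh1; rw [dif_neg hw'] at hh2
        rcases rtri v w with e | h1 | h1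
        · exact absurd e hvw
        · exact (humb v w u h1 hh2 hadjv).1
        · exact ((humb w v u h1 hh1 hadjw).1).symm
    · -- A ⊆ D'
      intro x y hA
      have h := hAle x y hA
      exact ⟨hAadj x y hA, by rw [dif_pos h]; exact hDA ⟨x, hult x h.1⟩ ⟨y, hult y h.2⟩ hA⟩
  · -- d → c in D; all "left" edges at c point out of c
    have hnli : ∀ (v : V) (hv : v ≠ L), r v c → ¬ D ⟨v, hv⟩ ⟨c, hcL⟩ := by
      intro v hv hvc hDv
      have hvd : r v d := rtrans _ _ _ hvc hcd
      have hne : (⟨v, hv⟩ : {u | u ≠ L}) ≠ ⟨d, hdL'⟩ := by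
        intro e
        have : v = d := congrArg Subtype.val e
        subst this; exact rasym _ _ hvd hvd
      have := hD.2.2.2.2 ⟨c, hcL⟩ ⟨v, hv⟩ ⟨d, hdL'⟩ hDv hin hne
      exact hcross v d hvc hcd (show G.Adj v d from this)
    refine ⟨fun u v => G.Adj u v ∧
      (if h : ¬ r c u ∧ ¬ r c v then D ⟨u, hult u h.1⟩ ⟨v, hult v h.2⟩ else r v u),
      ⟨fun u v h => h.1, ?_, ?_, ?_, ?_⟩, ?_⟩
    · intro u v hadj
      by_cases h : ¬ r c u ∧ ¬ r c v
      · have hadj' : (G.induce {u | u ≠ L}).Adj ⟨u, hult u h.1⟩ ⟨v, hult v h.2⟩ := hadj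
        rcases hD.2.1 _ _ hadj' with h1 | h1
        · exact Or.inl ⟨hadj, by rw [dif_pos h]; exact h1⟩
        · exact Or.inr ⟨hadj.symm, by rw [dif_pos ⟨h.2, h.1⟩]; exact h1⟩
      · rcases rtri u v with e | h1 | h1
        · exact absurd e hadj.ne
        · exact Or.inr ⟨hadj.symm, by rw [dif_neg (fun hh => h ⟨hh.2, hh.1⟩)]; exact h1⟩
        · exact Or.inl ⟨hadj, by rw [dif_neg h]; exact h1⟩
    · intro u v ⟨hadj, hh1⟩ ⟨hadj', hh2⟩
      by_cases h : ¬ r c u ∧ ¬ r c v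
      · rw [dif_pos h] at hh1; rw [dif_pos ⟨h.2, h.1⟩] at hh2
        exact hD.2.2.1 _ _ hh1 hh2
      · rw [dif_neg h] at hh1; rw [dif_neg (fun hh => h ⟨hh.2, hh.1⟩)] at hh2
        exact rasym v u hh1 hh2
    · -- out condition
      intro u v w ⟨hadjv, hh1⟩ ⟨hadjw, hh2⟩ hvw
      by_cases hv : ¬ r c u ∧ ¬ r c v <;> by_cases hw' : ¬ r c u ∧ ¬ r c w
      · rw [dif_pos hv] at hh1; rw [dif_pos hw'] at hh2
        exact hD.2.2.2.1 _ _ _ hh1 hh2 (fun e => hvw (congrArg Subtype.val e))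
      · rw [dif_neg hw'] at hh2
        have hrcw : r c w := by
          by_contra hh; exact hw' ⟨hv.1, hh⟩
        exact absurd (rtrans c w u hrcw hh2) hv.1
      · rw [dif_neg hv] at hh1
        have hrcv : r c v := by
          by_contra hh; exact hv ⟨hw'.1, hh⟩
        exact absurd (rtrans c v u hrcv hh1) hw'.1
      · rw [dif_neg hv] at hh1; rw [dif_neg hw'] at hh2
        rcases rtri v w with e | h1 | h1
        · exact absurd e hvw
        · exact (humb v w u h1 hh2 hadjv.symm).1
        · exact ((humb w v u h1 hh1 hadjw.symm).1).symm
    · -- in condition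
      intro u v w ⟨hadjv, hh1⟩ ⟨hadjw, hh2⟩ hvw
      by_cases hv : ¬ r c v ∧ ¬ r c u <;> by_cases hw' : ¬ r c w ∧ ¬ r c u
      · rw [dif_pos hv] at hh1; rw [dif_pos hw'] at hh2
        exact hD.2.2.2.2 _ _ _ hh1 hh2 (fun e => hvw (congrArg Subtype.val e))
      · -- class1 vu, class2 wu
        rw [dif_pos hv] at hh1; rw [dif_neg hw'] at hh2
        have hrcw : r c w := by
          by_contra hh; exact hw' ⟨hh, hv.2⟩
        rcases rtri u c with e | huc | hcu
        · have ecast : (⟨u, hult u hv.2⟩ : {x | x ≠ L}) = ⟨c, hcL⟩ := Subtype.ext e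
          rcases rtri v c with e' | hvc | hcv
          · exact (hadjv.ne (e'.trans e.symm)).elim
          · rw [ecast] at hh1
            exact absurd hh1 (hnli v _ hvc)
          · exact absurd hcv hv.1
        · exact absurd hadjw.symm (hcross u w huc hrcw)
        · exact absurd hcu hv.2
      · -- class2 vu, class1 wu
        rw [dif_neg hv] at hh1; rw [dif_pos hw'] at hh2
        have hrcv : r c v := by
          by_contra hh; exact hv ⟨hh, hw'.2⟩
        rcases rtri u c with e | huc | hcu
        · have ecast : (⟨u, hult u hw'.2⟩ : {x | x ≠ L}) = ⟨c, hcL⟩ := Subtype.ext e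
          rcases rtri w c with e' | hvc | hcv
          · exact (hadjw.ne (e'.trans e.symm)).elim
          · rw [ecast] at hh2
            exact absurd hh2 (hnli w _ hvc)
          · exact absurd hcv hw'.1
        · exact absurd hadjv.symm (hcross u v huc hrcv)
        · exact absurd hcu hw'.2
      · rw [dif_neg hv] at hh1; rw [dif_neg hw'] at hh2
        rcases rtri v w with e | h1 | h1
        · exact absurd e hvw
        · exact (humb u v w hh1 h1 hadjw.symm).2
        · exact ((humb u w v hh2 h1 hadjv.symm).2).symm
    · intro x y hA
      have h := hAle x y hA
      exact ⟨hAadj x y hA, by rw [dif_pos h]; exact hDA ⟨x, hult x h.1⟩ ⟨y, hult y h.2⟩ hA⟩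

end Aux

/-- If v_c is a non-dividing cut-vertex of an obstruction whose straight
enumeration is v_0, ..., v_{n-1} (the natural order of Fin n), then c = 1 or
c = n - 2 (i.e. v_c is the second or second-to-last vertex); moreover if v_c
is incident with both arcs then n = 4. -/
theorem nondividing_cut_vertex (n : ℕ) (G : SimpleGraph (Fin n))
    (A : Fin n → Fin n → Prop) (hobs : IsObstruction G A)
    (humb : ∀ u v w : Fin n, u < v → v < w → G.Adj u w → G.Adj u v ∧ G.Adj v w)
    (a₁ b₁ a₂ b₂ : Fin n) (h1 : A a₁ b₁) (h2 : A a₂ b₂)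
    (hne : (a₁, b₁) ≠ (a₂, b₂))
    (honly : ∀ x y, A x y → (x = a₁ ∧ y = b₁) ∨ (x = a₂ ∧ y = b₂))
    (c : Fin n) (hcut : IsCutVertex G c)
    (hnondiv : ¬ IsDividing a₁ b₁ a₂ b₂ c) :
    ((c : ℕ) = 1 ∨ (c : ℕ) = n - 2) ∧
      ((c = a₁ ∨ c = b₁) ∧ (c = a₂ ∨ c = b₂) → n = 4) := by
  classical
  obtain ⟨⟨hAadj, hAanti⟩, hncomp, hdel, -⟩ := hobs
  have rtri : ∀ a b : Fin n, a = b ∨ a < b ∨ b < a := fun a b => by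
    rcases lt_trichotomy a b with h | h | h
    · exact Or.inr (Or.inl h)
    · exact Or.inl h
    · exact Or.inr (Or.inr h)
  have rasym : ∀ a b : Fin n, a < b → ¬ b < a := fun a b h h' => absurd h (lt_asymm h')
  have rtrans : ∀ a b d : Fin n, a < b → b < d → a < d := fun a b d h h' => lt_trans h h'
  have hltv : ∀ a b : Fin n, (a:ℕ) < (b:ℕ) → a < b := fun a b h => Fin.lt_def.mpr h
  have hvlt : ∀ a b : Fin n, a < b → (a:ℕ) < (b:ℕ) := fun a b h => Fin.lt_def.mp h
  have hvne : ∀ a b : Fin n, (a:ℕ) = (b:ℕ) → a = b := fun a b h => Fin.ext h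
  have hstep : ∀ (a b : Fin n) (ha : a ≠ c) (hb : b ≠ c), G.Adj a b →
      (G.induce {x | x ≠ c}).Reachable ⟨a, ha⟩ ⟨b, hb⟩ := by
    intro a b ha hb h
    exact (show (G.induce {x | x ≠ c}).Adj ⟨a, ha⟩ ⟨b, hb⟩ from h).reachable
  have hsame : ∀ (u y : Fin n) (hu : u ≠ c) (hy : y ≠ c), u ≠ y → G.Adj u c → G.Adj c y →
      ¬ (u < c ∧ c < y) → ¬ (y < c ∧ c < u) →
      (G.induce {x | x ≠ c}).Reachable ⟨u, hu⟩ ⟨y, hy⟩ := by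
    intro u y hu hy huy hadjuc hadjcy hn1 hn2
    rcases rtri u c with e | huc | hcu
    · exact absurd e hu
    · have hyc : y < c := by
        rcases rtri y c with e | h | h
        · exact absurd e hy
        · exact h
        · exact absurd ⟨huc, h⟩ hn1
      rcases rtri u y with e | h | h
      · exact absurd e huy
      · exact hstep u y hu hy (humb u y c h hyc hadjuc).1
      · exact hstep u y hu hy ((humb y u c h huc hadjcy.symm).1).symm
    · have hcy : c < y := by
        rcases rtri y c with e | h | h
        · exact absurd e hy
        · exact absurd ⟨h, hcu⟩ hn2
        · exact h
      rcases rtri u y with e | h | h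
      · exact absurd e huy
      · exact hstep u y hu hy (humb c u y hcu h hadjcy).2
      · exact hstep u y hu hy ((humb c y u hcy h hadjuc.symm).2).symm
  have hA1 : ∃ u : Fin n, u < c ∧ G.Adj u c := by
    by_contra hno
    push_neg at hno
    refine absurd hcut (not_cut G c ?_)
    intro u y hu hy huy hadjuc hadjcy
    refine hsame u y hu hy huy hadjuc hadjcy ?_ ?_
    · rintro ⟨h, -⟩; exact hno u h hadjuc
    · rintro ⟨h, -⟩; exact hno y h hadjcy.symm
  have hA2 : ∃ y : Fin n, c < y ∧ G.Adj c y := by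
    by_contra hno
    push_neg at hno
    refine absurd hcut (not_cut G c ?_)
    intro u y hu hy huy hadjuc hadjcy
    refine hsame u y hu hy huy hadjuc hadjcy ?_ ?_
    · rintro ⟨-, h⟩; exact hno y h hadjcy
    · rintro ⟨-, h⟩; exact hno u h hadjuc.symm
  obtain ⟨u0, hu0lt, hu0adj⟩ := hA1
  obtain ⟨y0, hy0lt, hy0adj⟩ := hA2
  have hu0v : (u0:ℕ) < (c:ℕ) := hvlt _ _ hu0lt
  have hy0v : (c:ℕ) < (y0:ℕ) := hvlt _ _ hy0lt
  have hc0 : 0 < (c:ℕ) := by omega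
  have hcn : (c:ℕ) + 1 < n := by have := y0.isLt; omega
  obtain ⟨c1, hc1v⟩ : ∃ x : Fin n, (x:ℕ) = (c:ℕ) - 1 := ⟨⟨(c:ℕ)-1, by omega⟩, rfl⟩
  obtain ⟨c2, hc2v⟩ : ∃ x : Fin n, (x:ℕ) = (c:ℕ) + 1 := ⟨⟨(c:ℕ)+1, by omega⟩, rfl⟩
  have hc1c : c1 < c := hltv _ _ (by omega)
  have hcc2 : c < c2 := hltv _ _ (by omega)
  have hadjc1 : G.Adj c1 c := by
    by_cases e : u0 = c1
    · exact e ▸ hu0adj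
    · have hne' : (u0:ℕ) ≠ (c1:ℕ) := fun hh => e (hvne _ _ hh)
      exact (humb u0 c1 c (hltv _ _ (by omega)) hc1c hu0adj).2
  have hadjc2 : G.Adj c c2 := by
    by_cases e : y0 = c2
    · exact e ▸ hy0adj
    · have hne' : (y0:ℕ) ≠ (c2:ℕ) := fun hh => e (hvne _ _ hh)
      exact (humb c c2 y0 hcc2 (hltv _ _ (by omega)) hy0adj).1
  have hc1ne : c1 ≠ c := by intro e; have := congrArg Fin.val e; omega
  have hc2ne : c2 ≠ c := by intro e; have := congrArg Fin.val e; omega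
  have hnadj12 : ¬ G.Adj c1 c2 := by
    intro hadj12
    refine absurd hcut (not_cut G c ?_)
    intro u y hu hy huy hadjuc hadjcy
    have hbridge : ∀ (a b : Fin n) (ha : a ≠ c) (hb : b ≠ c), a < c → c < b →
        G.Adj a c → G.Adj c b → (G.induce {x | x ≠ c}).Reachable ⟨a, ha⟩ ⟨b, hb⟩ := by
      intro a b ha hb hac hcb hadja hadjb
      have r1 : (G.induce {x | x ≠ c}).Reachable ⟨a, ha⟩ ⟨c1, hc1ne⟩ := by
        by_cases e : a = c1
        · cases e; exact SimpleGraph.Reachable.refl _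
        · have h2' : (a:ℕ) ≠ (c1:ℕ) := fun hh => e (hvne _ _ hh)
          have h3 : (a:ℕ) < (c:ℕ) := hvlt _ _ hac
          exact hstep a c1 ha hc1ne (humb a c1 c (hltv _ _ (by omega)) hc1c hadja).1
      have r3 : (G.induce {x | x ≠ c}).Reachable ⟨c2, hc2ne⟩ ⟨b, hb⟩ := by
        by_cases e : b = c2
        · cases e; exact SimpleGraph.Reachable.refl _
        · have h2' : (b:ℕ) ≠ (c2:ℕ) := fun hh => e (hvne _ _ hh)
          have h3 : (c:ℕ) < (b:ℕ) := hvlt _ _ hcb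
          exact hstep c2 b hc2ne hb (humb c c2 b hcc2 (hltv _ _ (by omega)) hadjb).2
      exact (r1.trans (hstep c1 c2 hc1ne hc2ne hadj12)).trans r3
    rcases rtri u c with e | huc | hcu
    · exact absurd e hu
    · rcases rtri y c with e | hyc | hcy
      · exact absurd e hy
      · refine hsame u y hu hy huy hadjuc hadjcy ?_ ?_
        · rintro ⟨-, h⟩; exact rasym _ _ h hyc
        · rintro ⟨-, h⟩; exact rasym _ _ h huc
      · exact hbridge u y hu hy huc hcy hadjuc hadjcy
    · rcases rtri y c with e | hyc | hcy
      · exact absurd e hy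
      · exact (hbridge y u hy hu hyc hcu hadjcy.symm hadjuc.symm).symm
      · refine hsame u y hu hy huy hadjuc hadjcy ?_ ?_
        · rintro ⟨h, -⟩; exact rasym _ _ h hcu
        · rintro ⟨h, -⟩; exact rasym _ _ h hcy
  have hcross : ∀ u w : Fin n, u < c → c < w → ¬ G.Adj u w := by
    intro u w huc hcw hadj
    apply hnadj12
    have hucv : (u:ℕ) < (c:ℕ) := hvlt _ _ huc
    have hcwv : (c:ℕ) < (w:ℕ) := hvlt _ _ hcw
    have hstep1 : G.Adj c1 w := by
      by_cases e : u = c1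
      · exact e ▸ hadj
      · have h2' : (u:ℕ) ≠ (c1:ℕ) := fun hh => e (hvne _ _ hh)
        exact (humb u c1 w (hltv _ _ (by omega)) (hltv _ _ (by omega)) hadj).2
    by_cases e : w = c2
    · exact e ▸ hstep1
    · have h2' : (w:ℕ) ≠ (c2:ℕ) := fun hh => e (hvne _ _ hh)
      exact (humb c1 c2 w (hltv _ _ (by omega)) (hltv _ _ (by omega)) hstep1).1
  have hNotInc : ¬ (a₁ < b₁ ∧ a₂ < b₂) := by
    rintro ⟨hh1, hh2⟩
    refine hncomp ⟨fun u v => G.Adj u v ∧ u < v,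
      ltOrient G (· < ·) rtri rasym humb, ?_⟩
    intro u v hA
    rcases honly u v hA with ⟨rfl, rfl⟩ | ⟨rfl, rfl⟩
    · exact ⟨hAadj _ _ hA, hh1⟩
    · exact ⟨hAadj _ _ hA, hh2⟩
  have humbR : ∀ u v w : Fin n, v < u → w < v → G.Adj u w → G.Adj u v ∧ G.Adj v w :=
    fun u v w hh1 hh2 ha =>
      ⟨((humb w v u hh2 hh1 ha.symm).2).symm, ((humb w v u hh2 hh1 ha.symm).1).symm⟩
  have rtriR : ∀ a b : Fin n, a = b ∨ b < a ∨ a < b := fun a b => by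
    rcases rtri a b with e | h | h
    · exact Or.inl e
    · exact Or.inr (Or.inr h)
    · exact Or.inr (Or.inl h)
  have hNotDec : ¬ (b₁ < a₁ ∧ b₂ < a₂) := by
    rintro ⟨hh1, hh2⟩
    refine hncomp ⟨fun u v => G.Adj u v ∧ v < u,
      ltOrient G (fun a b => b < a) rtriR (fun a b h h' => rasym b a h h') humbR, ?_⟩
    intro u v hA
    rcases honly u v hA with ⟨rfl, rfl⟩ | ⟨rfl, rfl⟩
    · exact ⟨hAadj _ _ hA, hh1⟩
    · exact ⟨hAadj _ _ hA, hh2⟩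
  have hneval1 : (a₁:ℕ) ≠ (b₁:ℕ) := fun e => (hAadj _ _ h1).ne (hvne _ _ e)
  have hneval2 : (a₂:ℕ) ≠ (b₂:ℕ) := fun e => (hAadj _ _ h2).ne (hvne _ _ e)
  have hdir : (a₁ < b₁ ∧ b₂ < a₂) ∨ (b₁ < a₁ ∧ a₂ < b₂) := by
    rcases rtri a₁ b₁ with e | hf | hb
    · exact absurd (congrArg Fin.val e) hneval1
    · rcases rtri a₂ b₂ with e | hf2 | hb2
      · exact absurd (congrArg Fin.val e) hneval2
      · exact absurd ⟨hf, hf2⟩ hNotInc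
      · exact Or.inl ⟨hf, hb2⟩
    · rcases rtri a₂ b₂ with e | hf2 | hb2
      · exact absurd (congrArg Fin.val e) hneval2
      · exact Or.inr ⟨hb, hf2⟩
      · exact absurd ⟨hb, hb2⟩ hNotDec
  have hnd1 : ¬(((a₁:ℕ) < (c:ℕ) ∨ (b₁:ℕ) < (c:ℕ)) ∧ ((c:ℕ) < (a₂:ℕ) ∨ (c:ℕ) < (b₂:ℕ))) :=
    fun h => hnondiv (Or.inl h)
  have hnd2 : ¬(((a₂:ℕ) < (c:ℕ) ∨ (b₂:ℕ) < (c:ℕ)) ∧ ((c:ℕ) < (a₁:ℕ) ∨ (c:ℕ) < (b₁:ℕ))) :=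
    fun h => hnondiv (Or.inr h)
  have hside : ((a₁:ℕ) ≤ (c:ℕ) ∧ (b₁:ℕ) ≤ (c:ℕ) ∧ (a₂:ℕ) ≤ (c:ℕ) ∧ (b₂:ℕ) ≤ (c:ℕ)) ∨
      ((c:ℕ) ≤ (a₁:ℕ) ∧ (c:ℕ) ≤ (b₁:ℕ) ∧ (c:ℕ) ≤ (a₂:ℕ) ∧ (c:ℕ) ≤ (b₂:ℕ)) := by
    omega
  rcases hside with hS | hS
  · -- all arc endpoints ≤ c : conclude c = n - 2
    have hceq : (c:ℕ) = n - 2 := by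
      by_contra hneq
      have hALE : ∀ x y, A x y → ¬ c < x ∧ ¬ c < y := by
        have hnlt : ∀ x : Fin n, (x:ℕ) ≤ (c:ℕ) → ¬ c < x := fun x h h' => by
          have := hvlt _ _ h'; omega
        intro x y hA
        rcases honly x y hA with ⟨rfl, rfl⟩ | ⟨rfl, rfl⟩
        · exact ⟨hnlt _ hS.1, hnlt _ hS.2.1⟩
        · exact ⟨hnlt _ hS.2.2.1, hnlt _ hS.2.2.2⟩
      exact hncomp (core G A (· < ·) rtri rasym rtrans humb c c2 ⟨n-1, by omega⟩
        hAadj hALE hcc2 (hltv _ _ (by omega : (c2:ℕ) < n - 1)) hadjc2 hcross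
        (hdel ⟨n-1, by omega⟩))
    refine ⟨Or.inr hceq, ?_⟩
    rintro ⟨hi1, hi2⟩
    obtain ⟨p, q, hpA, hqA, hpv, hqv⟩ :
        ∃ p q : Fin n, A p c ∧ A c q ∧ (p:ℕ) < (c:ℕ) ∧ (q:ℕ) < (c:ℕ) := by
      rcases hdir with ⟨hf, hb⟩ | ⟨hb, hf⟩
      · have hfv := hvlt _ _ hf
        have hbv := hvlt _ _ hb
        have e1 : c = b₁ := by
          rcases hi1 with e | e
          · exfalso; have := congrArg Fin.val e; omega
          · exact e
        have e2 : c = a₂ := by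
          rcases hi2 with e | e
          · exact e
          · exfalso; have := congrArg Fin.val e; omega
        have ev1 := congrArg Fin.val e1
        have ev2 := congrArg Fin.val e2
        exact ⟨a₁, b₂, by rw [e1]; exact h1, by rw [e2]; exact h2, by omega, by omega⟩
      · have hfv := hvlt _ _ hf
        have hbv := hvlt _ _ hb
        have e1 : c = a₁ := by
          rcases hi1 with e | e
          · exact e
          · exfalso; have := congrArg Fin.val e; omega
        have e2 : c = b₂ := by
          rcases hi2 with e | e
          · exfalso; have := congrArg Fin.val e; omega
          · exact e
        have ev1 := congrArg Fin.val e1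
        have ev2 := congrArg Fin.val e2
        exact ⟨a₂, b₁, by rw [e2]; exact h2, by rw [e1]; exact h1, by omega, by omega⟩
    have hpq : (p:ℕ) ≠ (q:ℕ) := by
      intro e
      rw [← hvne p q e] at hqA
      exact hAanti p c hpA hqA
    have hc2val : (c:ℕ) = 2 := by
      by_contra hcne2
      have h3 : 3 ≤ (c:ℕ) := by omega
      obtain ⟨m, hm3, hmp, hmq⟩ : ∃ m : ℕ, m < 3 ∧ m ≠ (p:ℕ) ∧ m ≠ (q:ℕ) := by
        by_cases hp0 : (p:ℕ) = 0 <;> by_cases hq0 : (q:ℕ) = 0 <;>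
          by_cases hp1 : (p:ℕ) = 1 <;> by_cases hq1 : (q:ℕ) = 1 <;>
          first
            | exact ⟨0, by omega, by omega, by omega⟩
            | exact ⟨1, by omega, by omega, by omega⟩
            | exact ⟨2, by omega, by omega, by omega⟩
      have hmn : m < n := by omega
      obtain ⟨M, hMv⟩ : ∃ x : Fin n, (x:ℕ) = n - 1 := ⟨⟨n-1, by omega⟩, rfl⟩
      obtain ⟨z, hzv⟩ : ∃ x : Fin n, (x:ℕ) = m := ⟨⟨m, hmn⟩, rfl⟩
      have hc2M : c2 = M := hvne _ _ (by omega)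
      exact no_del G A p q c M z
        (fun e => by have := congrArg Fin.val e; omega)
        (fun e => by have := congrArg Fin.val e; omega)
        (fun e => by have := congrArg Fin.val e; omega)
        (fun e => by have := congrArg Fin.val e; omega)
        (fun e => by have := congrArg Fin.val e; omega)
        (fun e => by have := congrArg Fin.val e; omega)
        (hcross p M (hltv _ _ (by omega)) (hltv _ _ (by omega)))
        (hcross q M (hltv _ _ (by omega)) (hltv _ _ (by omega)))
        (hc2M ▸ hadjc2) hpA hqA (hdel z)
    omega
  · -- all arc endpoints ≥ c : conclude c = 1
    have hceq : (c:ℕ) = 1 := by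
      by_contra hneq
      have h2c : 2 ≤ (c:ℕ) := by omega
      have hALE : ∀ x y, A x y → ¬ x < c ∧ ¬ y < c := by
        have hnlt : ∀ x : Fin n, (c:ℕ) ≤ (x:ℕ) → ¬ x < c := fun x h h' => by
          have := hvlt _ _ h'; omega
        intro x y hA
        rcases honly x y hA with ⟨rfl, rfl⟩ | ⟨rfl, rfl⟩
        · exact ⟨hnlt _ hS.1, hnlt _ hS.2.1⟩
        · exact ⟨hnlt _ hS.2.2.1, hnlt _ hS.2.2.2⟩
      exact hncomp (core G A (fun a b => b < a) rtriR (fun a b h h' => rasym b a h h')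
        (fun a b d h h' => lt_trans h' h) humbR c c1 ⟨0, by omega⟩
        hAadj hALE hc1c (hltv _ _ (by omega : (0:ℕ) < (c1:ℕ)))
        hadjc1.symm (fun u w hcu hwc hadj => hcross w u hwc hcu hadj.symm)
        (hdel ⟨0, by omega⟩))
    refine ⟨Or.inl hceq, ?_⟩
    rintro ⟨hi1, hi2⟩
    obtain ⟨p, q, hpA, hqA, hpv, hqv⟩ :
        ∃ p q : Fin n, A p c ∧ A c q ∧ (c:ℕ) < (p:ℕ) ∧ (c:ℕ) < (q:ℕ) := by
      rcases hdir with ⟨hf, hb⟩ | ⟨hb, hf⟩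
      · have hfv := hvlt _ _ hf
        have hbv := hvlt _ _ hb
        have e1 : c = a₁ := by
          rcases hi1 with e | e
          · exact e
          · exfalso; have := congrArg Fin.val e; omega
        have e2 : c = b₂ := by
          rcases hi2 with e | e
          · exfalso; have := congrArg Fin.val e; omega
          · exact e
        have ev1 := congrArg Fin.val e1
        have ev2 := congrArg Fin.val e2
        exact ⟨a₂, b₁, by rw [e2]; exact h2, by rw [e1]; exact h1, by omega, by omega⟩
      · have hfv := hvlt _ _ hf
        have hbv := hvlt _ _ hb
        have e1 : c = b₁ := by
          rcases hi1 with e | e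
          · exfalso; have := congrArg Fin.val e; omega
          · exact e
        have e2 : c = a₂ := by
          rcases hi2 with e | e
          · exact e
          · exfalso; have := congrArg Fin.val e; omega
        have ev1 := congrArg Fin.val e1
        have ev2 := congrArg Fin.val e2
        exact ⟨a₁, b₂, by rw [e1]; exact h1, by rw [e2]; exact h2, by omega, by omega⟩
    have hpq : (p:ℕ) ≠ (q:ℕ) := by
      intro e
      rw [← hvne p q e] at hqA
      exact hAanti p c hpA hqA
    have hn4 : 4 ≤ n := by
      have := p.isLt; have := q.isLt; omega
    by_contra hnne
    have h5 : 5 ≤ n := by omega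
    obtain ⟨m, hm2, hm5, hmp, hmq⟩ :
        ∃ m : ℕ, 2 ≤ m ∧ m < 5 ∧ m ≠ (p:ℕ) ∧ m ≠ (q:ℕ) := by
      by_cases hp2 : (p:ℕ) = 2 <;> by_cases hq2 : (q:ℕ) = 2 <;>
        by_cases hp3 : (p:ℕ) = 3 <;> by_cases hq3 : (q:ℕ) = 3 <;>
        first
          | exact ⟨2, by omega, by omega, by omega, by omega⟩
          | exact ⟨3, by omega, by omega, by omega, by omega⟩
          | exact ⟨4, by omega, by omega, by omega, by omega⟩
    have hmn : m < n := by omega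
    obtain ⟨O, hOv⟩ : ∃ x : Fin n, (x:ℕ) = 0 := ⟨⟨0, by omega⟩, rfl⟩
    obtain ⟨z, hzv⟩ : ∃ x : Fin n, (x:ℕ) = m := ⟨⟨m, hmn⟩, rfl⟩
    have hc1O : c1 = O := hvne _ _ (by omega)
    exact no_del G A p q c O z
      (fun e => by have := congrArg Fin.val e; omega)
      (fun e => by have := congrArg Fin.val e; omega)
      (fun e => by have := congrArg Fin.val e; omega)
      (fun e => by have := congrArg Fin.val e; omega)
      (fun e => by have := congrArg Fin.val e; omega)
      (fun e => by have := congrArg Fin.val e; omega)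
      (fun h => hcross O p (hltv _ _ (by omega)) (hltv _ _ hpv) h.symm)
      (fun h => hcross O q (hltv _ _ (by omega)) (hltv _ _ hqv) h.symm)
      (hc1O ▸ hadjc1.symm) hpA hqA (hdel z)
end

section
/- Let X be an obstruction for local tournament orientation completions with straight enumeration v1,...,vn of its underlying graph, and suppose v_k is the (v_i,v_j)-balancing vertex for an arc between v_i and v_j. Then k < min{i,j} or k > max{i,j}. Moreover, if k < min{i,j}, then no vertex v_p with p < k is adjacent to either of v_i, v_j, and every vertex v_q with q > max{i,j} is adjacent to both or neither of v_i, v_j; the symmetric statement holds when k > max{i,j}. -/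
variable {V : Type*}

lemma balancing_helper {V : Type*} [LinearOrder V] (G : SimpleGraph V)
    (humb : ∀ u v w : V, u < v → v < w → G.Adj u w → G.Adj u v ∧ G.Adj v w)
    (i j k : V) (hij : i < j) (hadj : G.Adj i j)
    (hbal : IsArcBalancingFor G i j k) :
    (k < i ∨ j < k) ∧
    (k < i → (∀ p, p < k → ¬ G.Adj p i ∧ ¬ G.Adj p j) ∧
      (∀ q, j < q → (G.Adj q i ↔ G.Adj q j))) ∧
    (j < k → (∀ p, k < p → ¬ G.Adj p i ∧ ¬ G.Adj p j) ∧
      (∀ q, q < i → (G.Adj q i ↔ G.Adj q j))) := by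
  obtain ⟨hki, hkj, hxor, huniq⟩ := hbal
  have hpos : k < i ∨ j < k := by
    rcases lt_trichotomy k i with h | h | h
    · exact Or.inl h
    · exact absurd h hki
    rcases lt_trichotomy k j with h2 | h2 | h2
    · exfalso
      obtain ⟨h1, h2'⟩ := humb i k j h h2 hadj
      rcases hxor with ⟨_, hn⟩ | ⟨_, hn⟩
      · exact hn h2'
      · exact hn h1.symm
    · exact absurd h2 hkj
    · exact Or.inr h2
  refine ⟨hpos, ?_, ?_⟩
  · intro hk
    have hnkj : ¬ G.Adj k j := by
      intro h
      obtain ⟨h1, _⟩ := humb k i j hk hij h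
      rcases hxor with ⟨_, hn⟩ | ⟨_, hn⟩
      · exact hn h
      · exact hn h1
    constructor
    · intro p hp
      have hnpj : ¬ G.Adj p j := fun h => hnkj (humb p k j hp (hk.trans hij) h).2
      refine ⟨fun h => ?_, hnpj⟩
      exact absurd (huniq p (ne_of_lt (hp.trans hk)) (ne_of_lt (hp.trans (hk.trans hij)))
        (Or.inl ⟨h, hnpj⟩)) (ne_of_lt hp)
    · intro q hq
      constructor
      · intro h
        exact ((humb i j q hij hq h.symm).2).symm
      · intro h
        by_contra hn
        exact absurd (huniq q (ne_of_gt (hij.trans hq)) (ne_of_gt hq)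
          (Or.inr ⟨h, hn⟩)).symm (ne_of_lt ((hk.trans hij).trans hq))
  · intro hk
    have hnki : ¬ G.Adj k i := by
      intro h
      obtain ⟨_, h2⟩ := humb i j k hij hk h.symm
      rcases hxor with ⟨_, hn⟩ | ⟨_, hn⟩
      · exact hn h2.symm
      · exact hn h
    constructor
    · intro p hp
      have hnpi : ¬ G.Adj p i := fun h =>
        hnki ((humb i k p (hij.trans hk) hp h.symm).1).symm
      refine ⟨hnpi, fun h => ?_⟩
      exact absurd (huniq p (ne_of_gt ((hij.trans hk).trans hp)) (ne_of_gt (hk.trans hp))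
        (Or.inr ⟨h, hnpi⟩)) (ne_of_gt hp)
    · intro q hq
      constructor
      · intro h
        by_contra hn
        exact absurd (huniq q (ne_of_lt hq) (ne_of_lt (hq.trans hij))
          (Or.inl ⟨h, hn⟩)) (ne_of_lt ((hq.trans hij).trans hk))
      · intro h
        exact (humb q i j hq hij h).1

/-- Position of an arc-balancing vertex relative to the straight enumeration:
if v_k balances an arc between v_i and v_j then k lies outside the interval
[min i j, max i j]; if k is before both then nothing before k is adjacent to
either of i, j, and everything after both is adjacent to both or neither;
symmetrically when k is after both. -/
theorem balancing_vertex_position [LinearOrder V] (G : SimpleGraph V)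
    (A : V → V → Prop) (hobs : IsObstruction G A)
    (humb : ∀ u v w : V, u < v → v < w → G.Adj u w → G.Adj u v ∧ G.Adj v w)
    (i j k : V) (harc : A i j ∨ A j i)
    (hbal : IsArcBalancingFor G i j k) :
    (k < min i j ∨ max i j < k) ∧
    (k < min i j →
      (∀ p, p < k → ¬ G.Adj p i ∧ ¬ G.Adj p j) ∧
      (∀ q, max i j < q → (G.Adj q i ↔ G.Adj q j))) ∧
    (max i j < k →
      (∀ p, k < p → ¬ G.Adj p i ∧ ¬ G.Adj p j) ∧
      (∀ q, q < min i j → (G.Adj q i ↔ G.Adj q j))) := by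
  have hG : G.Adj i j := by
    rcases harc with h | h
    · exact hobs.1.1 i j h
    · exact (hobs.1.1 j i h).symm
  rcases lt_or_gt_of_ne hG.ne with hij | hji
  · rw [min_eq_left hij.le, max_eq_right hij.le]
    exact balancing_helper G humb i j k hij hG hbal
  · rw [min_eq_right hji.le, max_eq_left hji.le]
    obtain ⟨h1, h2, h3, h4⟩ := hbal
    have hbal' : IsArcBalancingFor G j i k :=
      ⟨h2, h1, h3.symm, fun w hw1 hw2 hx => h4 w hw2 hw1 hx.symm⟩
    obtain ⟨a, b, c⟩ := balancing_helper G humb j i k hji hG.symm hbal'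
    refine ⟨a, fun hk => ?_, fun hk => ?_⟩
    · obtain ⟨b1, b2⟩ := b hk
      exact ⟨fun p hp => (b1 p hp).symm, fun q hq => (b2 q hq).symm⟩
    · obtain ⟨c1, c2⟩ := c hk
      exact ⟨fun p hp => (c1 p hp).symm, fun q hq => (c2 q hq).symm⟩
end
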